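/- For every n ≥ 0, ⟨DⁿUⁿ∅, ∅⟩ = n!, where ∅ is the empty partition, U and D are the up and down operators on Young's lattice, and ⟨·,·⟩ is the inner product making the partitions an orthonormal basis. -/

import Mathlib

/-- `YDCovers μ λ` means `μ ⋖ λ` in Young's lattice: `μ ⊆ λ` and `|λ| = |μ| + 1`. -/
def YDCovers (μ ν : YoungDiagram) : Prop :=
  μ.cells ⊆ ν.cells ∧ ν.cells.card = μ.cells.card + 1

lemma YD_row_lt_card {l : YoungDiagram} {i j : ℕ} (h : (i, j) ∈ l) :
    i < l.cells.card := by
  have hsub : (Finset.range (i + 1)).image (fun k => (k, j)) ⊆ l.cells := by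
    intro p hp
    simp only [Finset.mem_image, Finset.mem_range] at hp
    obtain ⟨k, hk, rfl⟩ := hp
    simpa [YoungDiagram.mem_cells] using
      l.up_left_mem (Nat.lt_succ_iff.mp hk) le_rfl h
  have hc := Finset.card_le_card hsub
  rwa [Finset.card_image_of_injective _ (fun a b hab => by
      simpa using congrArg Prod.fst hab), Finset.card_range] at hc

lemma YD_col_lt_card {l : YoungDiagram} {i j : ℕ} (h : (i, j) ∈ l) :
    j < l.cells.card := by
  have hsub : (Finset.range (j + 1)).image (fun k => (i, k)) ⊆ l.cells := by
    intro p hp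
    simp only [Finset.mem_image, Finset.mem_range] at hp
    obtain ⟨k, hk, rfl⟩ := hp
    simpa [YoungDiagram.mem_cells] using
      l.up_left_mem le_rfl (Nat.lt_succ_iff.mp hk) h
  have hc := Finset.card_le_card hsub
  rwa [Finset.card_image_of_injective _ (fun a b hab => by
      simpa using congrArg Prod.snd hab), Finset.card_range] at hc

lemma YD_finite_bounded (B : Finset (ℕ × ℕ)) :
    {l : YoungDiagram | l.cells ⊆ B}.Finite := by
  have himg : (YoungDiagram.cells '' {l : YoungDiagram | l.cells ⊆ B}).Finite := by
    refine Set.Finite.subset (B.powerset : Finset (Finset (ℕ × ℕ))).finite_toSet ?_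
    rintro s ⟨l, hl, rfl⟩
    simpa using hl
  refine Set.Finite.of_finite_image himg ?_
  intro a _ b _ hab
  cases a; cases b; simpa using hab

lemma YD_finite_down (l : YoungDiagram) : {m : YoungDiagram | YDCovers m l}.Finite :=
  (YD_finite_bounded l.cells).subset fun _ hm => hm.1

lemma YD_finite_up (l : YoungDiagram) : {n : YoungDiagram | YDCovers l n}.Finite := by
  refine (YD_finite_bounded
    (Finset.range (l.cells.card + 1) ×ˢ Finset.range (l.cells.card + 1))).subset ?_
  rintro n ⟨_, hcard⟩ c hc
  obtain ⟨i, j⟩ := c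
  have hmem : (i, j) ∈ n := by simpa [YoungDiagram.mem_cells] using hc
  have h1 : i < n.cells.card := YD_row_lt_card hmem
  have h2 : j < n.cells.card := YD_col_lt_card hmem
  simp only [Finset.mem_product, Finset.mem_range]
  omega

/-- The set 𝒰(λ) of diagrams covering `l`, as a `Finset`. -/
noncomputable def upFinset (l : YoungDiagram) : Finset YoungDiagram :=
  (YD_finite_up l).toFinset

/-- The set 𝒟(λ) of diagrams covered by `l`, as a `Finset`. -/
noncomputable def downFinset (l : YoungDiagram) : Finset YoungDiagram :=
  (YD_finite_down l).toFinset

/-- Standard Young tableaux of shape `l`, encoded as saturated chains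
`⊥ = T 0 ⋖ T 1 ⋖ ⋯ ⋖ T n = l` in Young's lattice. -/
def SYTset (l : YoungDiagram) : Set (ℕ → YoungDiagram) :=
  {T | T 0 = ⊥ ∧ (∀ i, i < l.cells.card → YDCovers (T i) (T (i + 1))) ∧
    ∀ i, l.cells.card ≤ i → T i = l}

/-- `fTab l` is the number of standard Young tableaux of shape `l`. -/
noncomputable def fTab (l : YoungDiagram) : ℕ := Nat.card (SYTset l)

/-- arm-length of a cell -/
def armLen (l : YoungDiagram) (c : ℕ × ℕ) : ℕ := l.rowLen c.1 - (c.2 + 1)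

/-- leg-length of a cell -/
def legLen (l : YoungDiagram) (c : ℕ × ℕ) : ℕ := l.colLen c.2 - (c.1 + 1)

/-- hook-length of a cell -/
def hookLen (l : YoungDiagram) (c : ℕ × ℕ) : ℕ := armLen l c + legLen l c + 1

/-- product of all hook-lengths of a diagram -/
def Hprod (l : YoungDiagram) : ℕ := ∏ c ∈ l.cells, hookLen l c

/-- For `r ⋖ k`, the unique box of `k / r`. -/
def diffBox (r k : YoungDiagram) : ℕ × ℕ := (k.cells \ r.cells).sup id

/-- Given the removed box `bm = λ/μ` and the added box `bn = ν/λ`, the unique cell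
`c_{μ,ν}` of `λ` in the row of one box and the column of the other. -/
def cellC (l : YoungDiagram) (bm bn : ℕ × ℕ) : ℕ × ℕ :=
  if (bm.1, bn.2) ∈ l.cells then (bm.1, bn.2) else (bn.1, bm.2)

/-- The field ℚ(q,t). -/
abbrev Kqt : Type := FractionRing (MvPolynomial (Fin 2) ℚ)

noncomputable def qq : Kqt := algebraMap (MvPolynomial (Fin 2) ℚ) Kqt (MvPolynomial.X 0)
noncomputable def tt : Kqt := algebraMap (MvPolynomial (Fin 2) ℚ) Kqt (MvPolynomial.X 1)

/-- `[h_κ(c)]^ℓ = 1 - q^{a} t^{ℓ+1}`. -/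
noncomputable def hkL (k : YoungDiagram) (c : ℕ × ℕ) : Kqt :=
  1 - qq ^ armLen k c * tt ^ (legLen k c + 1)

/-- `[h_κ(c)]^a = 1 - q^{a+1} t^{ℓ}`. -/
noncomputable def hkA (k : YoungDiagram) (c : ℕ × ℕ) : Kqt :=
  1 - qq ^ (armLen k c + 1) * tt ^ legLen k c

/-- `b_κ(c)`. -/
noncomputable def bqt (k : YoungDiagram) (c : ℕ × ℕ) : Kqt := hkL k c / hkA k c

/-- cells of `r` in the row of the box `k/r` (the set ℛ_{κ/ρ}). -/
def rowCells (r k : YoungDiagram) : Finset (ℕ × ℕ) :=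
  r.cells.filter (fun c => c.1 = (diffBox r k).1)

/-- cells of `r` in the column of the box `k/r` (the set 𝒞_{κ/ρ}). -/
def colCells (r k : YoungDiagram) : Finset (ℕ × ℕ) :=
  r.cells.filter (fun c => c.2 = (diffBox r k).2)

/-- `ψ_{κ/ρ}(q,t)` for a single-box skew shape `κ/ρ`. -/
noncomputable def psiE (r k : YoungDiagram) : Kqt :=
  ∏ c ∈ rowCells r k \ colCells r k, bqt r c / bqt k c

/-- `φ_{κ/ρ}(q,t)` for a single-box skew shape `κ/ρ`. -/
noncomputable def phiE (r k : YoungDiagram) : Kqt :=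
  bqt k (diffBox r k) * ∏ c ∈ colCells r k, bqt k c / bqt r c

/-- `α_{κ/ρ}`. -/
noncomputable def alphaE (r k : YoungDiagram) : Kqt :=
  (∏ c ∈ rowCells r k, hkL r c / hkL k c) * ∏ c ∈ colCells r k, hkA r c / hkA k c

/-- `ᾱ_{κ/ρ}`. -/
noncomputable def alphaBarE (r k : YoungDiagram) : Kqt :=
  (∏ c ∈ rowCells r k, hkA r c / hkA k c) * ∏ c ∈ colCells r k, hkL r c / hkL k c

/-- `η_{ν/λ/μ}` in terms of the removed box `bm = λ/μ` and the added box `bn = ν/λ`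
(rows and columns here are 0-indexed, so e.g. `r_ν - r_μ = bn.1 - bm.1`). -/
noncomputable def etaE (bm bn : ℕ × ℕ) : Kqt :=
  (1 - qq) * (1 - tt) /
    ((1 - qq ^ ((bm.2 : ℤ) - bn.2) * tt ^ ((bn.1 : ℤ) - bm.1)) *
     (1 - qq ^ ((bm.2 : ℤ) - bn.2 + 1) * tt ^ ((bn.1 : ℤ) - bm.1 - 1)))

/-- `𝒫_λ(λ → ν) = t^{r_ν - 1} α_{ν/λ}` (0-indexed: `r_ν - 1 = (diffBox l n).1`). -/
noncomputable def Ptop (l n : YoungDiagram) : Kqt :=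
  tt ^ (diffBox l n).1 * alphaE l n

/-- `𝒫_λ(μ → ν)` for `μ ∈ 𝒟(λ)`. -/
noncomputable def Pmove (l m n : YoungDiagram) : Kqt :=
  tt ^ (((diffBox l n).1 : ℤ) - (diffBox m l).1 - 1) * (alphaE l n / alphaE m l) *
    etaE (diffBox m l) (diffBox l n)

/-- `𝒫̄_λ(λ ← ν) = t^{r_ν - 1} ᾱ_{ν/λ}`. -/
noncomputable def PbarTop (l n : YoungDiagram) : Kqt :=
  tt ^ (diffBox l n).1 * alphaBarE l n

/-- `𝒫̄_λ(μ ← ν)` for `μ ∈ 𝒟(λ)`. -/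
noncomputable def PbarMove (l m n : YoungDiagram) : Kqt :=
  tt ^ (((diffBox l n).1 : ℤ) - (diffBox m l).1 - 1) * (alphaBarE l n / alphaBarE m l) *
    etaE (diffBox m l) (diffBox l n)

/-- `ψ_T(q,t)` for a standard tableau encoded as a chain of shapes. -/
noncomputable def psiT (n : ℕ) (T : ℕ → YoungDiagram) : Kqt :=
  ∏ i ∈ Finset.range n, psiE (T i) (T (i + 1))

/-- `φ_T(q,t)` for a standard tableau encoded as a chain of shapes. -/
noncomputable def phiT (n : ℕ) (T : ℕ → YoungDiagram) : Kqt :=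
  ∏ i ∈ Finset.range n, phiE (T i) (T (i + 1))

/-- The up operator `U` on ℚ𝕐. -/
noncomputable def Uop : Module.End ℚ (YoungDiagram →₀ ℚ) :=
  Finsupp.lsum ℚ fun l => LinearMap.toSpanSingleton ℚ _
    (∑ n ∈ upFinset l, Finsupp.single n (1 : ℚ))

/-- The down operator `D` on ℚ𝕐. -/
noncomputable def Dop : Module.End ℚ (YoungDiagram →₀ ℚ) :=
  Finsupp.lsum ℚ fun l => LinearMap.toSpanSingleton ℚ _
    (∑ m ∈ downFinset l, Finsupp.single m (1 : ℚ))

/-- The (q,t)-up operator `U_{q,t}`. -/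
noncomputable def Uqt : Module.End Kqt (YoungDiagram →₀ Kqt) :=
  Finsupp.lsum Kqt fun l => LinearMap.toSpanSingleton Kqt _
    (∑ n ∈ upFinset l, Finsupp.single n (psiE l n))

/-- The (q,t)-down operator `D_{q,t}`. -/
noncomputable def Dqt : Module.End Kqt (YoungDiagram →₀ Kqt) :=
  Finsupp.lsum Kqt fun l => LinearMap.toSpanSingleton Kqt _
    (∑ m ∈ downFinset l, Finsupp.single m (phiE m l))

/-!
Young's lattice is 1-differential: `D * U = U * D + 1`. On the diagonal this says that a
diagram has one more addable corner than removable corners (row `0` is always addable, and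
row `r + 1` is addable exactly when row `r` is removable). Off the diagonal, two distinct
diagrams of the same size have a common upper cover iff they have a common lower cover, namely
their union and their intersection, because `|μ ∪ ν| + |μ ∩ ν| = |μ| + |ν|`.
From the commutation relation, `D * U ^ (n + 1) = U ^ (n + 1) * D + (n + 1) • U ^ n`, and
since `D ∅ = 0` induction gives `Dⁿ Uⁿ ∅ = n! ∅`.
-/

open Finset

open scoped Nat Classical

section OneDifferential

variable {A : Type*} [Semiring A] {d u : A}

theorem mul_pow_succ_of_mul_eq_mul_add_one (h : d * u = u * d + 1) (n : ℕ) :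
    d * u ^ (n + 1) = u ^ (n + 1) * d + (n + 1) • u ^ n := by
  induction n with
  | zero => simpa using h
  | succ n ih =>
    calc d * u ^ (n + 1 + 1) = d * u ^ (n + 1) * u := by rw [mul_assoc, ← pow_succ]
      _ = u ^ (n + 1) * (u * d + 1) + (n + 1) • u ^ (n + 1) := by
        rw [ih, add_mul, mul_assoc, h, smul_mul_assoc, ← pow_succ]
      _ = u ^ (n + 1 + 1) * d + (n + 1 + 1) • u ^ (n + 1) := by
        rw [mul_add, mul_one, ← mul_assoc, ← pow_succ]
        simp only [add_smul, one_smul]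
        abel

theorem pow_mul_pow_smul_eq_factorial_smul {M : Type*} [AddCommMonoid M] [Module A M]
    (h : d * u = u * d + 1) {v : M} (hv : d • v = 0) (n : ℕ) :
    (d ^ n * u ^ n) • v = n ! • v := by
  induction n with
  | zero => simp
  | succ n ih =>
    calc (d ^ (n + 1) * u ^ (n + 1)) • v = (d ^ n * (d * u ^ (n + 1))) • v := by
          rw [pow_succ, mul_assoc]
      _ = (d ^ n * u ^ (n + 1)) • d • v + (n + 1) • (d ^ n * u ^ n) • v := by
          rw [mul_pow_succ_of_mul_eq_mul_add_one h, mul_add, add_smul, ← mul_assoc,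
            mul_smul, mul_smul_comm, smul_assoc]
      _ = (n + 1) ! • v := by
          rw [hv, smul_zero, zero_add, ih, smul_smul, Nat.factorial_succ]

end OneDifferential

theorem ydCovers_iff_exists_insert {μ ν : YoungDiagram} :
    YDCovers μ ν ↔ ∃ c ∉ μ.cells, insert c μ.cells = ν.cells := by
  rw [exists_eq_insert_iff]
  exact and_congr_right' eq_comm

namespace YoungDiagram

variable {μ ν κ : YoungDiagram} {r : ℕ}

/-- The cell `(r, μ.rowLen r)` can be added to `μ`. -/
def IsAddableRow (μ : YoungDiagram) (r : ℕ) : Prop :=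
  r = 0 ∨ μ.rowLen r < μ.rowLen (r - 1)

/-- The cell `(r, μ.rowLen r - 1)` can be removed from `μ`. -/
def IsRemovableRow (μ : YoungDiagram) (r : ℕ) : Prop :=
  μ.rowLen (r + 1) < μ.rowLen r

theorem isAddableRow_zero (μ : YoungDiagram) : μ.IsAddableRow 0 := Or.inl rfl

theorem isAddableRow_succ : μ.IsAddableRow (r + 1) ↔ μ.IsRemovableRow r := by
  simp [IsAddableRow, IsRemovableRow]

theorem notMem_rowLen (μ : YoungDiagram) (r : ℕ) : (r, μ.rowLen r) ∉ μ := by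
  simp [mem_iff_lt_rowLen]

theorem mem_rowLen_sub_one (h : μ.IsRemovableRow r) : (r, μ.rowLen r - 1) ∈ μ :=
  mem_iff_lt_rowLen.2 (Nat.sub_one_lt_of_lt h)

def addCell (μ : YoungDiagram) (r : ℕ) (h : μ.IsAddableRow r) : YoungDiagram where
  cells := insert (r, μ.rowLen r) μ.cells
  isLowerSet := by
    rintro ⟨i, j⟩ ⟨i', j'⟩ ⟨hi, hj⟩ hc
    simp only [coe_insert, Set.mem_insert_iff, Prod.mk.injEq, mem_coe, mem_cells] at hc ⊢
    rcases hc with ⟨hir, hjr⟩ | hc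
    · rw [hir] at hi
      rw [hjr] at hj
      rw [mem_iff_lt_rowLen]
      have hrow := μ.rowLen_anti i' r hi
      by_cases hi' : i' = r
      · omega
      rcases h with rfl | h
      · omega
      · have := μ.rowLen_anti i' (r - 1) (by omega)
        omega
    · exact .inr (μ.up_left_mem hi hj hc)

def removeCell (μ : YoungDiagram) (r : ℕ) (h : μ.IsRemovableRow r) : YoungDiagram where
  cells := μ.cells.erase (r, μ.rowLen r - 1)
  isLowerSet := by
    rw [coe_erase]
    refine μ.isLowerSet.erase fun ⟨i, j⟩ hc ⟨hi, hj⟩ => ?_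
    dsimp only at hi hj
    have h' : μ.rowLen (r + 1) < μ.rowLen r := h
    have hj' : j < μ.rowLen i := mem_iff_lt_rowLen.1 hc
    have hi' : i = r := by
      by_contra hne
      have := μ.rowLen_anti (r + 1) i (by omega)
      omega
    subst hi'
    rw [Prod.mk.injEq]
    omega

theorem cells_removeCell (h : μ.IsRemovableRow r) :
    (μ.removeCell r h).cells = μ.cells.erase (r, μ.rowLen r - 1) := rfl

theorem ydCovers_addCell (h : μ.IsAddableRow r) : YDCovers μ (μ.addCell r h) :=
  ydCovers_iff_exists_insert.2 ⟨_, μ.notMem_rowLen r, rfl⟩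

theorem ydCovers_removeCell (h : μ.IsRemovableRow r) : YDCovers (μ.removeCell r h) μ :=
  ydCovers_iff_exists_insert.2 ⟨_, notMem_erase _ _, insert_erase (mem_rowLen_sub_one h)⟩

theorem eq_of_addCell_eq {r' : ℕ} (h : μ.IsAddableRow r) (h' : μ.IsAddableRow r')
    (heq : μ.addCell r h = μ.addCell r' h') : r = r' := by
  have hmem : (r, μ.rowLen r) ∈ (μ.addCell r' h').cells := heq ▸ mem_insert_self _ _
  rcases mem_insert.1 hmem with hc | hc
  · exact congrArg Prod.fst hc
  · exact absurd hc (μ.notMem_rowLen r)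

theorem eq_of_removeCell_eq {r' : ℕ} (h : μ.IsRemovableRow r) (h' : μ.IsRemovableRow r')
    (heq : μ.removeCell r h = μ.removeCell r' h') : r = r' := by
  by_contra hne
  have hmem : (r, μ.rowLen r - 1) ∈ (μ.removeCell r' h').cells :=
    mem_erase.2 ⟨by simp [hne], mem_rowLen_sub_one h⟩
  exact notMem_erase _ _ (heq ▸ hmem)

theorem _root_.YDCovers.exists_eq_addCell (hcov : YDCovers μ ν) :
    ∃ r h, ν = μ.addCell r h := by
  obtain ⟨⟨i, j⟩, hc, hins⟩ := ydCovers_iff_exists_insert.1 hcov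
  have hν : (i, j) ∈ ν := by rw [← mem_cells, ← hins]; exact mem_insert_self _ _
  have mem_of_ne : ∀ x ∈ ν, x ≠ (i, j) → x ∈ μ := fun x hx hne =>
    mem_of_mem_insert_of_ne (hins ▸ hx) hne
  have hj : j = μ.rowLen i := by
    have hle : μ.rowLen i ≤ j := not_lt.1 (hc ∘ mem_iff_lt_rowLen.2)
    by_contra hne
    refine μ.notMem_rowLen i (mem_of_ne _ (ν.up_left_mem le_rfl hle hν) ?_)
    simpa using Ne.symm hne
  subst hj
  have hadd : μ.IsAddableRow i := by
    rcases i.eq_zero_or_pos with hi | hi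
    · exact .inl hi
    · have hne : (i - 1, μ.rowLen i) ≠ (i, μ.rowLen i) := by simp only [ne_eq, Prod.mk.injEq, and_true]; omega
      exact .inr (mem_iff_lt_rowLen.1 (mem_of_ne _ (ν.up_left_mem (i.sub_le 1) le_rfl hν) hne))
  exact ⟨i, hadd, YoungDiagram.ext hins.symm⟩

theorem _root_.YDCovers.exists_eq_removeCell (hcov : YDCovers μ ν) :
    ∃ r h, μ = ν.removeCell r h := by
  obtain ⟨⟨i, j⟩, hc, hins⟩ := ydCovers_iff_exists_insert.1 hcov
  have hν : (i, j) ∈ ν := by rw [← mem_cells, ← hins]; exact mem_insert_self _ _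
  have not_mem : ∀ x ∈ ν, (i, j) ≤ x → x ≠ (i, j) → False := fun x hx hle hne =>
    hc (μ.up_left_mem hle.1 hle.2 (mem_of_mem_insert_of_ne (hins ▸ hx) hne))
  have hj : j = ν.rowLen i - 1 := by
    have := mem_iff_lt_rowLen.1 hν
    by_contra hne
    exact not_mem (i, j + 1) (mem_iff_lt_rowLen.2 (by omega)) (by simp) (by simp)
  have hrem : ν.IsRemovableRow i := by
    by_contra hle
    rw [IsRemovableRow, not_lt] at hle
    exact not_mem (i + 1, j) (mem_iff_lt_rowLen.2 ((mem_iff_lt_rowLen.1 hν).trans_le hle))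
      (by simp) (by simp)
  subst hj
  refine ⟨i, hrem, YoungDiagram.ext ?_⟩
  rw [cells_removeCell, ← hins, erase_insert hc]

theorem IsRemovableRow.lt_colLen (h : μ.IsRemovableRow r) : r < μ.colLen 0 :=
  mem_iff_lt_colLen.1 (mem_iff_lt_rowLen.2 (Nat.zero_lt_of_lt h))

theorem IsAddableRow.lt_colLen_add_one (h : μ.IsAddableRow r) : r < μ.colLen 0 + 1 := by
  cases r with
  | zero => omega
  | succ r => exact Nat.succ_lt_succ (isAddableRow_succ.1 h).lt_colLen

noncomputable def addableRows (μ : YoungDiagram) : Finset ℕ :=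
  (range (μ.colLen 0 + 1)).filter μ.IsAddableRow

noncomputable def removableRows (μ : YoungDiagram) : Finset ℕ :=
  (range (μ.colLen 0)).filter μ.IsRemovableRow

theorem mem_addableRows : r ∈ μ.addableRows ↔ μ.IsAddableRow r := by
  simpa [addableRows] using IsAddableRow.lt_colLen_add_one

theorem mem_removableRows : r ∈ μ.removableRows ↔ μ.IsRemovableRow r := by
  simpa [removableRows] using IsRemovableRow.lt_colLen

theorem card_addableRows (μ : YoungDiagram) :
    #μ.addableRows = #μ.removableRows + 1 := by
  rw [addableRows, range_add_one', filter_insert, if_pos μ.isAddableRow_zero, filter_map,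
    card_insert_of_notMem (by simp), card_map]
  exact congrArg (#· + 1) (filter_congr fun _ _ => isAddableRow_succ)

theorem eq_of_cells_subset_of_card_le (h : μ.cells ⊆ ν.cells) (hcard : #ν.cells ≤ #μ.cells) :
    μ = ν :=
  YoungDiagram.ext (eq_of_subset_of_card_le h hcard)

theorem _root_.YDCovers.eq_sup (hμ : YDCovers μ κ) (hν : YDCovers ν κ) (hne : μ ≠ ν) :
    κ = μ ⊔ ν := by
  obtain ⟨hμκ, hμcard⟩ := hμ
  obtain ⟨hνκ, hνcard⟩ := hν
  have hlt : #μ.cells < #(μ ⊔ ν).cells := by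
    rw [cells_sup]
    refine card_lt_card ⟨subset_union_left, fun hsub => hne ?_⟩
    exact (eq_of_cells_subset_of_card_le (subset_union_right.trans hsub) (by omega)).symm
  refine (eq_of_cells_subset_of_card_le ?_ (by omega)).symm
  rw [cells_sup]
  exact union_subset hμκ hνκ

theorem _root_.YDCovers.eq_inf (hμ : YDCovers κ μ) (hν : YDCovers κ ν) (hne : μ ≠ ν) :
    κ = μ ⊓ ν := by
  obtain ⟨hκμ, hμcard⟩ := hμ
  obtain ⟨hκν, hνcard⟩ := hν
  have hlt : #(μ ⊓ ν).cells < #μ.cells := by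
    rw [cells_inf]
    refine card_lt_card ⟨inter_subset_left, fun hsub => hne ?_⟩
    exact eq_of_cells_subset_of_card_le (hsub.trans inter_subset_right) (by omega)
  refine eq_of_cells_subset_of_card_le ?_ (by omega)
  rw [cells_inf]
  exact subset_inter hκμ hκν

theorem ydCovers_sup_and_ydCovers_sup_iff (μ ν : YoungDiagram) :
    YDCovers μ (μ ⊔ ν) ∧ YDCovers ν (μ ⊔ ν) ↔ YDCovers (μ ⊓ ν) μ ∧ YDCovers (μ ⊓ ν) ν := by
  have := card_union_add_card_inter μ.cells ν.cells
  simp only [YDCovers, cells_sup, cells_inf, subset_union_left, subset_union_right,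
    inter_subset_left, inter_subset_right, true_and]
  omega

end YoungDiagram

open YoungDiagram

theorem mem_upFinset {μ ν : YoungDiagram} : ν ∈ upFinset μ ↔ YDCovers μ ν :=
  Set.Finite.mem_toFinset _

theorem mem_downFinset {μ ν : YoungDiagram} : μ ∈ downFinset ν ↔ YDCovers μ ν :=
  Set.Finite.mem_toFinset _

section Covers

variable {μ ν : YoungDiagram}

theorem card_upFinset (μ : YoungDiagram) : #(upFinset μ) = #μ.addableRows :=
  (card_bij (fun r hr => μ.addCell r (mem_addableRows.1 hr))
    (fun _ _ => mem_upFinset.2 (ydCovers_addCell _))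
    (fun _ _ _ _ => eq_of_addCell_eq _ _)
    (fun _ hν => by
      obtain ⟨r, h, rfl⟩ := (mem_upFinset.1 hν).exists_eq_addCell
      exact ⟨r, mem_addableRows.2 h, rfl⟩)).symm

theorem card_downFinset (ν : YoungDiagram) : #(downFinset ν) = #ν.removableRows :=
  (card_bij (fun r hr => ν.removeCell r (mem_removableRows.1 hr))
    (fun _ _ => mem_downFinset.2 (ydCovers_removeCell _))
    (fun _ _ _ _ => eq_of_removeCell_eq _ _)
    (fun _ hμ => by
      obtain ⟨r, h, rfl⟩ := (mem_downFinset.1 hμ).exists_eq_removeCell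
      exact ⟨r, mem_removableRows.2 h, rfl⟩)).symm

theorem card_upFinset_eq_card_downFinset_add_one (μ : YoungDiagram) :
    #(upFinset μ) = #(downFinset μ) + 1 := by
  rw [card_upFinset, card_downFinset, card_addableRows]

theorem card_filter_upFinset_ydCovers (hne : μ ≠ ν) :
    #{κ ∈ upFinset μ | YDCovers ν κ} =
      if YDCovers μ (μ ⊔ ν) ∧ YDCovers ν (μ ⊔ ν) then 1 else 0 := by
  have : {κ ∈ upFinset μ | YDCovers ν κ} =
      {κ ∈ ({μ ⊔ ν} : Finset _) | YDCovers μ κ ∧ YDCovers ν κ} := by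
    ext κ
    simp only [mem_filter, mem_upFinset, mem_singleton]
    exact ⟨fun ⟨hμ, hν⟩ => ⟨hμ.eq_sup hν hne, hμ, hν⟩, fun ⟨_, h⟩ => h⟩
  rw [this, filter_singleton]
  split_ifs <;> rfl

theorem card_filter_downFinset_ydCovers (hne : μ ≠ ν) :
    #{κ ∈ downFinset μ | YDCovers κ ν} =
      if YDCovers (μ ⊓ ν) μ ∧ YDCovers (μ ⊓ ν) ν then 1 else 0 := by
  have : {κ ∈ downFinset μ | YDCovers κ ν} =
      {κ ∈ ({μ ⊓ ν} : Finset _) | YDCovers κ μ ∧ YDCovers κ ν} := by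
    ext κ
    simp only [mem_filter, mem_downFinset, mem_singleton]
    exact ⟨fun ⟨hμ, hν⟩ => ⟨hμ.eq_inf hν hne, hμ, hν⟩, fun ⟨_, h⟩ => h⟩
  rw [this, filter_singleton]
  split_ifs <;> rfl

theorem card_filter_upFinset_eq_card_filter_downFinset (hne : μ ≠ ν) :
    #{κ ∈ upFinset μ | YDCovers ν κ} = #{κ ∈ downFinset μ | YDCovers κ ν} := by
  simp only [card_filter_upFinset_ydCovers hne, card_filter_downFinset_ydCovers hne,
    ydCovers_sup_and_ydCovers_sup_iff]

end Covers

theorem Uop_single_apply (μ ν : YoungDiagram) :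
    Uop (Finsupp.single μ 1) ν = if YDCovers μ ν then 1 else 0 := by
  simp [Uop, Finsupp.finsetSum_apply, Finsupp.single_apply, mem_upFinset]

theorem Dop_single_apply (μ ν : YoungDiagram) :
    Dop (Finsupp.single μ 1) ν = if YDCovers ν μ then 1 else 0 := by
  simp [Dop, Finsupp.finsetSum_apply, Finsupp.single_apply, mem_downFinset]

theorem Dop_mul_Uop_single_apply (μ ν : YoungDiagram) :
    (Dop * Uop) (Finsupp.single μ 1) ν = #{κ ∈ upFinset μ | YDCovers ν κ} := by
  simp [Uop, Finsupp.finsetSum_apply, Dop_single_apply]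

theorem Uop_mul_Dop_single_apply (μ ν : YoungDiagram) :
    (Uop * Dop) (Finsupp.single μ 1) ν = #{κ ∈ downFinset μ | YDCovers κ ν} := by
  simp [Dop, Finsupp.finsetSum_apply, Uop_single_apply]

theorem Dop_mul_Uop : Dop * Uop = Uop * Dop + 1 := by
  ext μ ν
  simp only [LinearMap.comp_apply, Finsupp.lsingle_apply, LinearMap.add_apply,
    Finsupp.add_apply, Module.End.one_apply, Dop_mul_Uop_single_apply, Uop_mul_Dop_single_apply]
  by_cases hνμ : ν = μ
  · subst hνμ
    rw [filter_true_of_mem fun _ => mem_upFinset.1, filter_true_of_mem fun _ => mem_downFinset.1,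
      card_upFinset_eq_card_downFinset_add_one, Finsupp.single_eq_same, Nat.cast_succ]
  · rw [card_filter_upFinset_eq_card_filter_downFinset (Ne.symm hνμ),
      Finsupp.single_eq_of_ne hνμ, add_zero]

theorem Dop_single_bot : Dop (Finsupp.single ⊥ 1) = 0 := by
  ext μ
  rw [Dop_single_apply, if_neg fun h => by simpa using h.2]
  rfl

/-- `⟨DⁿUⁿ∅, ∅⟩ = n!`. -/
theorem down_up_pow_empty (n : ℕ) :
    ((Dop ^ n * Uop ^ n) (Finsupp.single (⊥ : YoungDiagram) (1 : ℚ)))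
      (⊥ : YoungDiagram) = (Nat.factorial n : ℚ) := by
  rw [← Module.End.smul_def, pow_mul_pow_smul_eq_factorial_smul Dop_mul_Uop Dop_single_bot]
  simp
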